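/- Let φ : ℂ → ℂ be a non-constant entire function and define f : M₂(ℂ) → M₂(ℂ) by f(x)₁₁ = x₁₁, f(x)₂₂ = x₂₂, f(x)₁₂ = e^{-φ(x₁₂x₂₁)}·x₁₂, f(x)₂₁ = e^{φ(x₁₂x₂₁)}·x₂₁. Then there is no map u : Ω → GL₂(ℂ) that is conjugate invariant (i.e. u(q⁻¹·x·q) = u(x) for every x ∈ Ω and every invertible q ∈ M₂(ℂ)) and satisfies f(x) = u(x)⁻¹·x·u(x) for every x ∈ Ω. -/

import Mathlib

/-!
Writing `D = diag(1, e^{φ(x₁₂x₂₁)})`, one has `f x = D x D⁻¹`, so `f x = u(x)⁻¹ x u(x)` says that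
`u(x) D` commutes with `x`. On the conjugacy class of `A = diag(1/2, -1/2)`, which lies in `Ω`,
`u` takes a single value `U`; commuting with `A` forces `U = diag(p, q)`. The class contains
`[[d, 1], [w, -d]]` for every `w` (with `d² = 1/4 - w`), and a diagonal matrix commuting with it is
scalar, so `p = q e^{φ(w)}` for all `w`. Hence `e^φ`, and therefore `φ`, is constant.
-/

open Matrix

section CommRing

variable {R : Type*} [CommRing R]

theorem Matrix.eq_diagonal_of_commute_diagonal [NoZeroDivisors R] {M : Matrix (Fin 2) (Fin 2) R}
    {d : Fin 2 → R} (h : Commute M (diagonal d)) (hd : d 0 ≠ d 1) :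
    M = diagonal ![M 0 0, M 1 1] := by
  have h01 := congr_fun₂ h 0 1
  have h10 := congr_fun₂ h 1 0
  simp only [mul_diagonal, diagonal_mul] at h01 h10
  ext i j
  fin_cases i <;> fin_cases j <;> simp
  · exact (mul_eq_zero.1 (by linear_combination -h01 : (d 0 - d 1) * M 0 1 = 0)).resolve_left
      (sub_ne_zero.2 hd)
  · exact (mul_eq_zero.1 (by linear_combination h10 : (d 0 - d 1) * M 1 0 = 0)).resolve_left
      (sub_ne_zero.2 hd)

theorem Matrix.eq_of_commute_diagonal [NoZeroDivisors R] {x : Matrix (Fin 2) (Fin 2) R}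
    {d : Fin 2 → R} (h : Commute (diagonal d) x) (hx : x 0 1 ≠ 0) : d 0 = d 1 := by
  have h01 := congr_fun₂ h 0 1
  simp only [mul_diagonal, diagonal_mul] at h01
  exact sub_eq_zero.1 ((mul_eq_zero.1
    (by linear_combination h01 : (d 0 - d 1) * x 0 1 = 0)).resolve_right hx)

theorem Matrix.semiconjBy_diagonal_fin_two {s s' : R} (hs : s' * s = 1)
    (x : Matrix (Fin 2) (Fin 2) R) :
    SemiconjBy (diagonal ![1, s]) x !![x 0 0, s' * x 0 1; s * x 1 0, x 1 1] := by
  ext i j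
  fin_cases i <;> fin_cases j <;> simp [mul_apply, Fin.sum_univ_two]
  · linear_combination -x 0 1 * hs
  · ring

variable {n : Type*} [Fintype n] [DecidableEq n]

theorem Matrix.spectrum_inv_mul_mul {q : Matrix n n R} (hq : IsUnit q) (x : Matrix n n R) :
    spectrum R (q⁻¹ * x * q) = spectrum R x := by
  obtain ⟨Q, rfl⟩ := hq
  rw [← coe_units_inv, spectrum.units_conjugate']

theorem Matrix.semiconjBy_of_eq_inv_mul_mul {U x y : Matrix n n R} (hU : IsUnit U)
    (h : y = U⁻¹ * x * U) : SemiconjBy U y x := by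
  rw [h, SemiconjBy, Matrix.mul_assoc U⁻¹,
    mul_nonsing_inv_cancel_left U _ ((isUnit_iff_isUnit_det U).mp hU)]

end CommRing

theorem exists_inv_mul_diagonal_mul_eq {d w : ℂ} (h : d ^ 2 + w = 1 / 4) :
    ∃ q : Matrix (Fin 2) (Fin 2) ℂ, IsUnit q ∧
      q⁻¹ * diagonal ![1 / 2, -1 / 2] * q = !![d, 1; w, -d] := by
  set q : Matrix (Fin 2) (Fin 2) ℂ := !![d + 1 / 2, 1; d - 1 / 2, 1]
  have hq : IsUnit q.det := by simp [q, det_fin_two_of]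
  have hsemi : diagonal ![1 / 2, -1 / 2] * q = q * !![d, 1; w, -d] := by
    ext i j
    fin_cases i <;> fin_cases j <;> simp [q, mul_apply, Fin.sum_univ_two]
    · linear_combination -h
    · linear_combination -h
    · ring
  refine ⟨q, (isUnit_iff_isUnit_det q).mpr hq, ?_⟩
  rw [Matrix.mul_assoc, hsemi, nonsing_inv_mul_cancel_left q _ hq]

theorem Complex.is_const_of_exp_comp_eq_const {φ : ℂ → ℂ} (hφ : Differentiable ℂ φ) {c : ℂ}
    (h : ∀ z, Complex.exp (φ z) = c) (z w : ℂ) : φ z = φ w := by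
  refine is_const_of_deriv_eq_zero hφ (fun z => ?_) z w
  have := ((hφ z).hasDerivAt.cexp).unique (by simp_rw [h]; exact hasDerivAt_const z c)
  simpa [Complex.exp_ne_zero] using this

theorem not_conjugate_invariant_conjugation
    (φ : ℂ → ℂ) (hφ : Differentiable ℂ φ) (hnc : ¬ ∃ c : ℂ, ∀ z : ℂ, φ z = c)
    (f : Matrix (Fin 2) (Fin 2) ℂ → Matrix (Fin 2) (Fin 2) ℂ)
    (hf : ∀ x, f x = !![x 0 0, Complex.exp (-φ (x 0 1 * x 1 0)) * x 0 1;
                        Complex.exp (φ (x 0 1 * x 1 0)) * x 1 0, x 1 1])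
    (Ω : Set (Matrix (Fin 2) (Fin 2) ℂ))
    (hΩ : Ω = {x | ∀ z ∈ spectrum ℂ x, ‖z‖ < 1}) :
    ¬ ∃ u : Matrix (Fin 2) (Fin 2) ℂ → Matrix (Fin 2) (Fin 2) ℂ,
        (∀ x ∈ Ω, IsUnit (u x)) ∧
        (∀ x ∈ Ω, ∀ q : Matrix (Fin 2) (Fin 2) ℂ, IsUnit q → u (q⁻¹ * x * q) = u x) ∧
        (∀ x ∈ Ω, f x = (u x)⁻¹ * x * u x) := by
  rintro ⟨u, hu, hinv, hconj⟩
  set A : Matrix (Fin 2) (Fin 2) ℂ := diagonal ![1 / 2, -1 / 2]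
  have hA : A ∈ Ω := by rw [hΩ]; norm_num [A]
  have hAconj : ∀ q, IsUnit q → q⁻¹ * A * q ∈ Ω := fun q hq => by
    simpa only [hΩ, Set.mem_ofPred_eq, spectrum_inv_mul_mul hq] using hA
  have hsemi : ∀ x ∈ Ω, SemiconjBy (u x) (f x) x :=
    fun x hx => semiconjBy_of_eq_inv_mul_mul (hu x hx) (hconj x hx)
  have hcomm : ∀ x ∈ Ω, Commute (u x * diagonal ![1, Complex.exp (φ (x 0 1 * x 1 0))]) x :=
    fun x hx => (hsemi x hx).mul_left (hf x ▸ semiconjBy_diagonal_fin_two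
      (by rw [← Complex.exp_add, neg_add_cancel, Complex.exp_zero]) x)
  have hfA : f A = A := by
    rw [hf]; ext i j; fin_cases i <;> fin_cases j <;> simp [A]
  have hcommA : Commute (u A) A := by simpa only [Commute, hfA] using hsemi A hA
  have hUA : u A = diagonal ![u A 0 0, u A 1 1] :=
    eq_diagonal_of_commute_diagonal hcommA (by norm_num)
  have hexp : ∀ w, u A 0 0 = u A 1 1 * Complex.exp (φ w) := by
    intro w
    obtain ⟨d, hd⟩ := IsAlgClosed.exists_pow_nat_eq (1 / 4 - w) two_pos
    obtain ⟨q, hq, hB⟩ := exists_inv_mul_diagonal_mul_eq (by rw [hd]; ring : d ^ 2 + w = 1 / 4)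
    have h := hcomm _ (hAconj q hq)
    rw [hinv A hA q hq, hB, hUA, diagonal_mul_diagonal] at h
    simpa using eq_of_commute_diagonal h (by simp)
  have h11 : u A 1 1 ≠ 0 := by
    intro h11
    have hU0 : u A = 0 := by rw [hUA, hexp 0, h11]; simp
    exact not_isUnit_zero (hU0 ▸ hu A hA)
  refine hnc ⟨φ 0, fun z => Complex.is_const_of_exp_comp_eq_const hφ
    (c := u A 0 0 / u A 1 1) (fun w => ?_) z 0⟩
  rw [eq_div_iff h11, mul_comm, hexp]
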